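/- Let X be a subset of the ground set of a matroid M, and let I be a basis of X in M. Then λ_M(X) = r_{M*}(X | X − I), i.e. the connectivity of X equals the relative rank, in the dual matroid M*, of X relative to X − I. -/

import Mathlib

/-!
Extend the basis `J` of `E(M) - X` to a basis `B` of `I ∪ J`, so that `n_M(I ∪ J) = |I - B|`.
As `J` spans `E(M) - X`, `B` is a base of `M \ (X - I) = M | (I ∪ (E(M) - X))` meeting
`E(M) - X` in its basis `J`; complementing in the dual, `I - B` is a basis of `I` in
`(M \ (X - I))* = M* / (X - I)`, so the relative rank is `|I - B|` as well.
-/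

open Set

namespace Matroid

variable {α : Type*} {ι : Type*}

/-- The deletion of a set `D` of elements from `M`. -/
def delete' (M : Matroid α) (D : Set α) : Matroid α := M ↾ (M.E \ D)

/-- The contraction of a set `C` of elements from `M`, defined as the dual of the
deletion of `C` from the dual. -/
def contract' (M : Matroid α) (C : Set α) : Matroid α := (M✶.delete' C)✶

/-- A circuit of `M` is a minimal dependent subset of the ground set. -/
def Circuit (M : Matroid α) (C : Set α) : Prop :=
  C ⊆ M.E ∧ ¬ M.Indep C ∧ ∀ I, I ⊂ C → M.Indep I

/-- The rank of a set `X` in `M`, valued in `ℕ∞`. It is the supremum of the `encard`s of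
the independent subsets of `X`; equivalently, the `encard` of any basis of `X`. -/
noncomputable def eRk' (M : Matroid α) (X : Set α) : ℕ∞ :=
  ⨆ I : {I : Set α // M.Indep I ∧ I ⊆ X}, I.1.encard

/-- The rank of the matroid `M`, valued in `ℕ∞`. -/
noncomputable def eRank' (M : Matroid α) : ℕ∞ := M.eRk' M.E

/-- The nullity of a set `X` in `M`, valued in `ℕ∞` : the corank of the restriction
of `M` to `X`. -/
noncomputable def nullity (M : Matroid α) (X : Set α) : ℕ∞ := (M ↾ X)✶.eRank'

/-- The relative rank of `Y` with respect to `X` : the rank of `Y \ X` in `M / X`. -/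
noncomputable def eRelRk (M : Matroid α) (X Y : Set α) : ℕ∞ := (M.contract' X).eRk' (Y \ X)

/-- `B` is a mutual basis in `M` for the indexed set family `X` if `B` is independent
and `X i ∩ B` is a basis of `X i` in `M` for each index `i`. -/
def IsMutualBasis (M : Matroid α) (B : Set α) (X : ι → Set α) : Prop :=
  M.Indep B ∧ ∀ i, M.IsBasis (X i ∩ B) (X i)

/-- An indexed set family is modular in `M` if it has a mutual basis. -/
def IsModularFamily (M : Matroid α) (X : ι → Set α) : Prop := ∃ B, M.IsMutualBasis B X

/-- `B` is a mutual basis in `M` for the collection `𝓧` of sets if `B` is independent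
and `X ∩ B` is a basis of `X` in `M` for each `X ∈ 𝓧`. -/
def IsMutualBasisSet (M : Matroid α) (B : Set α) (𝓧 : Set (Set α)) : Prop :=
  M.Indep B ∧ ∀ X ∈ 𝓧, M.IsBasis (X ∩ B) X

/-- A collection of sets is modular in `M` if it has a mutual basis. -/
def IsModularSetFamily (M : Matroid α) (𝓧 : Set (Set α)) : Prop :=
  ∃ B, M.IsMutualBasisSet B 𝓧

/-- `(X, Y)` is a modular pair in `M` if `{X, Y}` has a mutual basis. -/
def IsModularPair (M : Matroid α) (X Y : Set α) : Prop := M.IsModularSetFamily {X, Y}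

/-- A flat `F` of `M` is modular if it forms a modular pair with every flat of `M`. -/
def IsModularFlat (M : Matroid α) (F : Set α) : Prop :=
  M.IsFlat F ∧ ∀ G, M.IsFlat G → M.IsModularPair F G

/-- A matroid is modular if every flat is modular. -/
def Modular (M : Matroid α) : Prop := ∀ F, M.IsFlat F → M.IsModularFlat F

/-- An indexed family of sets is skew in `M` if it is modular in `M`, and the
intersection of any two distinct members consists of loops. -/
def IsSkewFamily (M : Matroid α) (X : ι → Set α) : Prop :=
  M.IsModularFamily X ∧ ∀ ⦃i j⦄, i ≠ j → X i ∩ X j ⊆ M.closure ∅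

/-- A modular cut of `M` : a collection of flats that is up-closed, closed under
intersections of modular pairs, and closed under intersections of infinite
modular chains. -/
def IsModularCut (M : Matroid α) (𝓕 : Set (Set α)) : Prop :=
  (∀ F ∈ 𝓕, M.IsFlat F) ∧
  (∀ F F', F ∈ 𝓕 → M.IsFlat F' → F ⊆ F' → F' ∈ 𝓕) ∧
  (∀ F F', F ∈ 𝓕 → F' ∈ 𝓕 → M.IsModularPair F F' → F ∩ F' ∈ 𝓕) ∧
  (∀ 𝓒 ⊆ 𝓕, 𝓒.Infinite → IsChain (· ⊆ ·) 𝓒 → M.IsModularSetFamily 𝓒 → ⋂₀ 𝓒 ∈ 𝓕)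

/-- `N` is a quotient of `M` if they have the same ground set, and every set's closure
in `M` is contained in its closure in `N`. -/
def IsQuotient (N M : Matroid α) : Prop := N.E = M.E ∧ ∀ X, M.closure X ⊆ N.closure X

/-- A hyperplane of `M` is a maximal proper flat of `M`. -/
def Hyperplane (M : Matroid α) (H : Set α) : Prop :=
  M.IsFlat H ∧ H ≠ M.E ∧ ∀ F, M.IsFlat F → H ⊂ F → F = M.E

/-- The discrepancy of the pair `(N, M)` : the minimum of `(B \ B₀).encard` over all
`(N,M)`-basis pairs, i.e. pairs `(B₀, B)` where `B₀` is a base of `N`, `B` is a base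
of `M` and `B₀ ⊆ B`. -/
noncomputable def discrepancy (N M : Matroid α) : ℕ∞ :=
  ⨅ p : {p : Set α × Set α // N.IsBase p.1 ∧ M.IsBase p.2 ∧ p.1 ⊆ p.2},
    (p.1.2 \ p.1.1).encard

variable {M : Matroid α} {B I J X Y : Set α}

lemma eRk'_eq_eRk (M : Matroid α) (X : Set α) : M.eRk' X = M.eRk X := by
  obtain ⟨I, hI⟩ := M.exists_isBasis' X
  refine le_antisymm (iSup_le fun K ↦ K.2.1.encard_le_eRk_of_subset K.2.2) ?_
  rw [← hI.encard_eq_eRk]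
  exact le_iSup (fun K : {K : Set α // M.Indep K ∧ K ⊆ X} ↦ K.1.encard) ⟨I, hI.indep, hI.subset⟩

lemma IsBasis.nullity_eq (hB : M.IsBasis B X) : M.nullity X = (X \ B).encard := by
  rw [nullity, eRank', eRk'_eq_eRk, eRk_ground, ← hB.isBase_restrict.encard_compl_eq]
  rfl

lemma eRelRk_eq_eRk_contract (M : Matroid α) (X Y : Set α) :
    M.eRelRk X Y = (M ／ X).eRk (Y \ X) :=
  eRk'_eq_eRk _ _

lemma IsBasis.isBasis_union_of_isBasis_union (hJ : M.IsBasis J Y) (hB : M.IsBasis B (I ∪ J)) :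
    M.IsBasis B (I ∪ Y) := by
  have hcl : M.closure (I ∪ J) = M.closure (I ∪ Y) :=
    closure_union_congr_right hJ.closure_eq_closure
  refine hB.isBasis_closure_right.isBasis_subset
    (hB.subset.trans (union_subset_union_right I hJ.subset)) ?_
  rw [hcl]
  exact M.subset_closure _ (union_subset (subset_union_left.trans hB.subset_ground)
    hJ.subset_ground)

lemma IsBasis.dual_restrict_isBasis_sdiff (hJ : M.IsBasis J Y) (hB : M.IsBasis B (I ∪ J))
    (hJB : J ⊆ B) (hIY : Disjoint I Y) : (M ↾ (I ∪ Y))✶.IsBasis (I \ B) I := by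
  have hBY : B ∩ Y = J := subset_antisymm
    (fun x ⟨hxB, hxY⟩ ↦ (hB.subset hxB).resolve_left fun hxI ↦ hIY.notMem_of_mem_left hxI hxY)
    (subset_inter hJB hJ.subset)
  have hJ' : (M ↾ (I ∪ Y)).IsBasis (B ∩ Y) Y := by
    rw [hBY, isBasis_restrict_iff', inter_eq_self_of_subset_left hJ.subset_ground]
    exact ⟨hJ, subset_union_right⟩
  have hBbase : (M ↾ (I ∪ Y)).IsBase B := (hJ.isBasis_union_of_isBasis_union hB).isBase_restrict
  convert hBbase.compl_inter_isBasis_of_inter_isBasis hJ' using 1 <;>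
    simp only [restrict_ground_eq] <;> tauto_set

/-- For every basis `I` of `X` in `M` (and any basis `J` of `E(M) \ X`,
so that the left-hand side is the connectivity `λ_M(X) = n_M(I ∪ J)`), the connectivity
of `X` equals the relative rank in `M✶` of `X` with respect to `X \ I`. -/
theorem conn_eq_eRelRk_dual (M : Matroid α) {X I J : Set α}
    (hI : M.IsBasis I X) (hJ : M.IsBasis J (M.E \ X)) :
    M.nullity (I ∪ J) = M✶.eRelRk (X \ I) X := by
  obtain ⟨B, hB, hJB⟩ := hJ.indep.subset_isBasis_of_subset subset_union_right
    (union_subset hI.indep.subset_ground hJ.indep.subset_ground)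
  have hIX := hI.subset
  have hXE := hI.subset_ground
  have hdelete : M ＼ (X \ I) = M ↾ (I ∪ (M.E \ X)) := by
    rw [delete_eq_restrict]
    congr 1
    tauto_set
  rw [hB.nullity_eq, eRelRk_eq_eRk_contract, ← dual_delete, hdelete, sdiff_sdiff_cancel_left hIX,
    (hJ.dual_restrict_isBasis_sdiff hB hJB (disjoint_sdiff_right.mono_left hIX)).eRk_eq_encard,
    union_sdiff_distrib, sdiff_eq_empty.2 hJB, union_empty]
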